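/- Let F be a field, let d be a natural number, let P be a polynomial over F of degree at most d, let S be a finite set of elements of F (distinct evaluation points), and let y : F → F be a received word. Let g be the number of x ∈ S with y(x) = P(x) and let b = |S| − g. If g > b + d, then for every polynomial Q over F of degree at most d with Q ≠ P, the number of x ∈ S with y(x) = Q(x) is strictly less than g. In particular, P is the unique polynomial of degree at most d that agrees with the received word on the largest number of points of S. -/

import Mathlib

open Polynomial Finset

/- At a point where both `P` and `Q` agree with `y` they agree with each other, which for distinct
polynomials of degree at most `d` happens at most `d` times. Every other point where `Q` agrees
with `y` is one of the `b` points where `P` does not, so `Q` agrees with `y` at most `d + b < g`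
times. -/

theorem Finset.card_filter_le_card_filter_and_add_card_filter_not {α : Type*} (s : Finset α)
    (p q : α → Prop) [DecidablePred p] [DecidablePred q] :
    #(s.filter q) ≤ #(s.filter fun x => p x ∧ q x) + #(s.filter fun x => ¬p x) := by
  rw [← card_filter_add_card_filter_not (s := s.filter q) p, filter_filter, filter_filter]
  exact add_le_add (card_le_card (monotone_filter_right _ fun _ _ h => ⟨h.2, h.1⟩))
    (card_le_card (monotone_filter_right _ fun _ _ h => h.2))

theorem Polynomial.card_filter_eval_eq_le {R : Type*} [CommRing R] [IsDomain R] [DecidableEq R]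
    {d : ℕ} {p q : R[X]} (hp : p.natDegree ≤ d) (hq : q.natDegree ≤ d) (hpq : p ≠ q)
    (s : Finset R) : #(s.filter fun x => p.eval x = q.eval x) ≤ d := by
  by_contra! h
  exact hpq (eq_of_natDegree_lt_card_of_eval_eq' p q _ (fun x hx => (mem_filter.1 hx).2)
    (max_le hp hq |>.trans_lt h))

/-- Unique decoding of Reed–Solomon codes (Berlekamp–Welch guarantee).
Let `P` be a polynomial of degree at most `d` over a field `F`, let `S` be a
finite set of evaluation points, and let `y : F → F` be the received word.
If `g` is the number of points of `S` where `y` agrees with `P` and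
`b = |S| − g`, and `g > b + d`, then every other polynomial `Q ≠ P` of degree
at most `d` agrees with `y` on strictly fewer than `g` points of `S`. -/
theorem stmt_4 {F : Type*} [Field F] [DecidableEq F] (d : ℕ)
    (P : Polynomial F) (hP : P.natDegree ≤ d) (S : Finset F) (y : F → F)
    (g b : ℕ)
    (hg : g = (S.filter (fun x => y x = P.eval x)).card)
    (hb : b = S.card - g)
    (hgb : g > b + d) :
    ∀ Q : Polynomial F, Q.natDegree ≤ d → Q ≠ P →
      (S.filter (fun x => y x = Q.eval x)).card < g := by
  intro Q hQ hQP
  have hcommon : #(S.filter fun x => y x = P.eval x ∧ y x = Q.eval x) ≤ d :=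
    (card_le_card (monotone_filter_right S fun _ _ h => h.1.symm.trans h.2)).trans
      (card_filter_eval_eq_le hP hQ hQP.symm S)
  have hsplit := S.card_filter_le_card_filter_and_add_card_filter_not
    (fun x => y x = P.eval x) (fun x => y x = Q.eval x)
  have hbad := S.card_filter_add_card_filter_not fun x => y x = P.eval x
  omega
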